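/- arXiv:2103.04730 — 2 statements merged into one kernel-verified Lean document; each statement's English description precedes it below -/
import Mathlib

section
/- Under the natural constraints, if 0 < β ≤ 1, 0 ≤ b ≤ 1, and T ≥ 2, then at the subsidy m₁(b) the active value function strictly exceeds the passive value function: Va m₁(b) T b > Vp m₁(b) T b. -/
/-!
Let `qp` and `qa` be the beliefs reached from `b` under the passive and the active transition,
so that `m₁(b) = β (qa - qp)` with `qp < qa`. Each `V T` is convex, being a maximum of an affine
function and of `V (T - 1)` composed with an affine map; hence the active continuation
`b V(p11a) + (1 - b) V(p01a)` is at least `V(qa)`. Since `β > 0` and both transitions separate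
the states strictly, `V T` grows strictly faster than the identity once `T ≥ 1`, so
`β (V(qa) - V(qp)) > β (qa - qp) = m₁(b)`: the continuation gain of acting beats the subsidy.
-/

noncomputable def V (β m p01p p11p p01a p11a : ℝ) : ℕ → ℝ → ℝ
  | 0, b => b
  | T + 1, b =>
      max (b + m + β * V β m p01p p11p p01a p11a T (b * p11p + (1 - b) * p01p))
          (b + β * (b * V β m p01p p11p p01a p11a T p11a
                    + (1 - b) * V β m p01p p11p p01a p11a T p01a))

noncomputable def Vp (β m p01p p11p p01a p11a : ℝ) (T : ℕ) (b : ℝ) : ℝ :=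
  b + m + β * V β m p01p p11p p01a p11a (T - 1) (b * p11p + (1 - b) * p01p)

noncomputable def Va (β m p01p p11p p01a p11a : ℝ) (T : ℕ) (b : ℝ) : ℝ :=
  b + β * (b * V β m p01p p11p p01a p11a (T - 1) p11a
           + (1 - b) * V β m p01p p11p p01a p11a (T - 1) p01a)

open Set

section ValueFunction

variable {β m p01p p11p p01a p11a : ℝ}

theorem V_succ (T : ℕ) (b : ℝ) :
    V β m p01p p11p p01a p11a (T + 1) b
      = max (Vp β m p01p p11p p01a p11a (T + 1) b) (Va β m p01p p11p p01a p11a (T + 1) b) :=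
  rfl

theorem monotone_V_sub (hβ : 0 ≤ β) (hp : p01p ≤ p11p) (ha : p01a ≤ p11a) (T : ℕ) :
    Monotone fun x => V β m p01p p11p p01a p11a T x - x := by
  induction T with
  | zero => intro x y _; simp [V]
  | succ T ih =>
    intro x y hxy
    have hq : x * p11p + (1 - x) * p01p ≤ y * p11p + (1 - y) * p01p := by nlinarith
    have hVq := ih hq
    have hVa : V β m p01p p11p p01a p11a T p01a ≤ V β m p01p p11p p01a p11a T p11a := by
      linarith [ih ha]
    simp only [V_succ, Vp, Va, Nat.add_sub_cancel, ← max_sub_sub_right]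
    apply max_le_max
    · nlinarith [mul_le_mul_of_nonneg_left hVq hβ]
    · nlinarith [mul_nonneg (mul_nonneg hβ (sub_nonneg.2 hxy)) (sub_nonneg.2 hVa)]

theorem strictMono_V_succ_sub (hβ : 0 < β) (hp : p01p < p11p) (ha : p01a < p11a) (T : ℕ) :
    StrictMono fun x => V β m p01p p11p p01a p11a (T + 1) x - x := by
  intro x y hxy
  have hV := monotone_V_sub (m := m) hβ.le hp.le ha.le T
  have hq : x * p11p + (1 - x) * p01p < y * p11p + (1 - y) * p01p := by nlinarith
  have hVq := hV hq.le
  have hVa := hV ha.le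
  simp only [V_succ, Vp, Va, Nat.add_sub_cancel, ← max_sub_sub_right]
  apply max_lt_max
  · nlinarith [mul_lt_mul_of_pos_left hq hβ]
  · nlinarith [mul_pos (mul_pos hβ (sub_pos.2 hxy)) (sub_pos.2 ha)]

theorem convexOn_Vp_succ (hβ : 0 ≤ β) {T : ℕ}
    (hV : ConvexOn ℝ univ (V β m p01p p11p p01a p11a T)) :
    ConvexOn ℝ univ (Vp β m p01p p11p p01a p11a (T + 1)) := by
  refine ⟨convex_univ, fun x _ y _ s t hs ht hst => ?_⟩
  obtain rfl : t = 1 - s := by linarith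
  have hq : (s * x + (1 - s) * y) * p11p + (1 - (s * x + (1 - s) * y)) * p01p
      = s * (x * p11p + (1 - x) * p01p) + (1 - s) * (y * p11p + (1 - y) * p01p) := by ring
  have hVq := hV.2 (mem_univ (x * p11p + (1 - x) * p01p))
    (mem_univ (y * p11p + (1 - y) * p01p)) hs ht (add_sub_cancel s 1)
  simp only [smul_eq_mul] at hVq ⊢
  simp only [Vp, Nat.add_sub_cancel, hq]
  nlinarith [mul_le_mul_of_nonneg_left hVq hβ]

theorem convexOn_Va_succ (T : ℕ) : ConvexOn ℝ univ (Va β m p01p p11p p01a p11a (T + 1)) := by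
  refine ⟨convex_univ, fun x _ y _ s t _ _ hst => le_of_eq ?_⟩
  obtain rfl : t = 1 - s := by linarith
  simp only [Va, smul_eq_mul]
  ring

theorem convexOn_V (hβ : 0 ≤ β) (T : ℕ) : ConvexOn ℝ univ (V β m p01p p11p p01a p11a T) := by
  induction T with
  | zero => exact convexOn_id convex_univ
  | succ T ih => exact (convexOn_Vp_succ hβ ih).sup (convexOn_Va_succ T)

end ValueFunction

theorem active_exceeds_passive_at_myopic_index_general
    (p01p p11p p01a p11a β b : ℝ) (T : ℕ)
    (h2 : p01p < p11p)
    (h5 : p01a < p11a)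
    (h7 : p01a > p01p) (h8 : p11a > p11p)
    (hβ0 : 0 < β) (hb0 : 0 ≤ b) (hb1 : b ≤ 1) (hT : 2 ≤ T) :
    Va β (β * ((b * p11a + (1 - b) * p01a) - (b * p11p + (1 - b) * p01p)))
        p01p p11p p01a p11a T b
      > Vp β (β * ((b * p11a + (1 - b) * p01a) - (b * p11p + (1 - b) * p01p)))
        p01p p11p p01a p11a T b := by
  obtain ⟨S, rfl⟩ : ∃ S, T = S + 1 + 1 := ⟨T - 2, by omega⟩
  set qa := b * p11a + (1 - b) * p01a
  set qp := b * p11p + (1 - b) * p01p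
  set m := β * (qa - qp)
  have hq : qp < qa := by
    rcases hb0.eq_or_lt with rfl | hb
    · simpa [qa, qp] using h7
    · nlinarith [mul_pos hb (sub_pos.2 h8)]
  have hconv : V β m p01p p11p p01a p11a (S + 1) qa
      ≤ b * V β m p01p p11p p01a p11a (S + 1) p11a
        + (1 - b) * V β m p01p p11p p01a p11a (S + 1) p01a :=
    (convexOn_V hβ0.le (S + 1)).2 (mem_univ p11a) (mem_univ p01a) hb0 (sub_nonneg.2 hb1)
      (add_sub_cancel b 1)
  have hgrowth := strictMono_V_succ_sub (m := m) hβ0 h2 h5 S hq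
  simp only [Va, Vp, Nat.add_sub_cancel, gt_iff_lt]
  linarith [mul_lt_mul_of_pos_left hgrowth hβ0, mul_le_mul_of_nonneg_left hconv hβ0.le]

theorem active_exceeds_passive_at_myopic_index
    (p01p p11p p01a p11a β b : ℝ) (T : ℕ)
    (h1 : 0 ≤ p01p) (h2 : p01p < p11p) (h3 : p11p ≤ 1)
    (h4 : 0 ≤ p01a) (h5 : p01a < p11a) (h6 : p11a ≤ 1)
    (h7 : p01a > p01p) (h8 : p11a > p11p)
    (hβ0 : 0 < β) (hβ1 : β ≤ 1) (hb0 : 0 ≤ b) (hb1 : b ≤ 1) (hT : 2 ≤ T) :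
    Va β (β * ((b * p11a + (1 - b) * p01a) - (b * p11p + (1 - b) * p01p)))
        p01p p11p p01a p11a T b
      > Vp β (β * ((b * p11a + (1 - b) * p01a) - (b * p11p + (1 - b) * p01p)))
        p01p p11p p01a p11a T b :=
  active_exceeds_passive_at_myopic_index_general p01p p11p p01a p11a β b T h2 h5 h7 h8 hβ0 hb0 hb1
    hT
end

section
/- Under the natural constraints, if β > 0, 0 ≤ b ≤ 1, and T ≥ 1, then at zero passive subsidy the active value function strictly exceeds the passive value function: Va 0 T b > Vp 0 T b. In particular, the minimum subsidy required to make the passive action as valuable as the active action at any belief b ∈ [0,1] is strictly greater than 0. -/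
open Set

lemma mix_mem_Icc_zero_one {b p q : ℝ} (hb : b ∈ Icc (0 : ℝ) 1) (hp : p ∈ Icc (0 : ℝ) 1)
    (hq : q ∈ Icc (0 : ℝ) 1) : b * p + (1 - b) * q ∈ Icc (0 : ℝ) 1 := by
  simpa only [smul_eq_mul] using
    convex_Icc (0 : ℝ) 1 hp hq hb.1 (sub_nonneg.2 hb.2) (add_sub_cancel b 1)

lemma mix_lt_mix {b p q p' q' : ℝ} (hb : b ∈ Icc (0 : ℝ) 1) (hp : p < p') (hq : q < q') :
    b * p + (1 - b) * q < b * p' + (1 - b) * q' := by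
  rcases hb.1.eq_or_lt with rfl | hb0
  · simpa using hq
  · have := mul_lt_mul_of_pos_left hp hb0
    have := mul_le_mul_of_nonneg_left hq.le (sub_nonneg.2 hb.2)
    linarith

noncomputable def activeValue (β p01a p11a : ℝ) : ℕ → ℝ → ℝ
  | 0, b => b
  | T + 1, b =>
      b + β * (b * activeValue β p01a p11a T p11a + (1 - b) * activeValue β p01a p11a T p01a)

section activeValue

variable {β p01a p11a : ℝ}

lemma activeValue_mix (T : ℕ) (t x y : ℝ) :
    activeValue β p01a p11a T (t * x + (1 - t) * y)
      = t * activeValue β p01a p11a T x + (1 - t) * activeValue β p01a p11a T y := by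
  cases T with
  | zero => rfl
  | succ T => simp only [activeValue]; ring

lemma sub_le_activeValue_sub (hβ : 0 ≤ β) (ha : p01a ≤ p11a) (T : ℕ) {x y : ℝ} (hxy : x ≤ y) :
    y - x ≤ activeValue β p01a p11a T y - activeValue β p01a p11a T x := by
  induction T generalizing x y with
  | zero => simp [activeValue]
  | succ T ih =>
    have hslope : 0 ≤ β * (activeValue β p01a p11a T p11a - activeValue β p01a p11a T p01a) :=
      mul_nonneg hβ (by linarith [ih ha])
    simp only [activeValue]
    linarith [mul_nonneg (sub_nonneg.2 hxy) hslope]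

lemma activeValue_strictMono (hβ : 0 ≤ β) (ha : p01a ≤ p11a) (T : ℕ) :
    StrictMono (activeValue β p01a p11a T) := fun x y hxy => by
  linarith [sub_le_activeValue_sub hβ ha T hxy.le]

end activeValue

section subsidy

variable {β m p01p p11p p01a p11a : ℝ}

lemma passive_step_lt_active_step (hβ : 0 < β) (hm : m ≤ 0) (ha : p01a ≤ p11a)
    (h01 : p01p < p01a) (h11 : p11p < p11a) (S : ℕ) {b : ℝ} (hb : b ∈ Icc (0 : ℝ) 1) :
    b + m + β * activeValue β p01a p11a S (b * p11p + (1 - b) * p01p)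
      < b + β * (b * activeValue β p01a p11a S p11a
        + (1 - b) * activeValue β p01a p11a S p01a) := by
  rw [← activeValue_mix]
  have := activeValue_strictMono hβ.le ha S (mix_lt_mix hb h11 h01)
  linarith [mul_lt_mul_of_pos_left this hβ]

lemma V_eq_activeValue (hβ : 0 < β) (hm : m ≤ 0)
    (hp01p : p01p ∈ Icc (0 : ℝ) 1) (hp11p : p11p ∈ Icc (0 : ℝ) 1)
    (hp01a : p01a ∈ Icc (0 : ℝ) 1) (hp11a : p11a ∈ Icc (0 : ℝ) 1) (ha : p01a ≤ p11a)
    (h01 : p01p < p01a) (h11 : p11p < p11a) (T : ℕ) {b : ℝ} (hb : b ∈ Icc (0 : ℝ) 1) :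
    V β m p01p p11p p01a p11a T b = activeValue β p01a p11a T b := by
  induction T generalizing b with
  | zero => rfl
  | succ T ih =>
    simp only [V, activeValue]
    rw [ih (mix_mem_Icc_zero_one hb hp11p hp01p), ih hp11a, ih hp01a]
    exact max_eq_right (passive_step_lt_active_step hβ hm ha h01 h11 T hb).le

lemma Vp_lt_Va (hβ : 0 < β) (hm : m ≤ 0)
    (hp01p : p01p ∈ Icc (0 : ℝ) 1) (hp11p : p11p ∈ Icc (0 : ℝ) 1)
    (hp01a : p01a ∈ Icc (0 : ℝ) 1) (hp11a : p11a ∈ Icc (0 : ℝ) 1) (ha : p01a ≤ p11a)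
    (h01 : p01p < p01a) (h11 : p11p < p11a) (T : ℕ) {b : ℝ} (hb : b ∈ Icc (0 : ℝ) 1) :
    Vp β m p01p p11p p01a p11a T b < Va β m p01p p11p p01a p11a T b := by
  have hV {x : ℝ} (hx : x ∈ Icc (0 : ℝ) 1) :=
    V_eq_activeValue hβ hm hp01p hp11p hp01a hp11a ha h01 h11 (T - 1) hx
  rw [Vp, Va, hV (mix_mem_Icc_zero_one hb hp11p hp01p), hV hp11a, hV hp01a]
  exact passive_step_lt_active_step hβ hm ha h01 h11 (T - 1) hb

end subsidy

theorem active_exceeds_passive_at_zero_subsidy_general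
    (p01p p11p p01a p11a β b : ℝ) (T : ℕ)
    (h1 : 0 ≤ p01p) (h2 : p01p < p11p) (h3 : p11p ≤ 1)
    (h4 : 0 ≤ p01a) (h5 : p01a < p11a) (h6 : p11a ≤ 1)
    (h7 : p01a > p01p) (h8 : p11a > p11p)
    (hβ : 0 < β) (hb0 : 0 ≤ b) (hb1 : b ≤ 1) :
    Va β 0 p01p p11p p01a p11a T b > Vp β 0 p01p p11p p01a p11a T b ∧
    (∀ m : ℝ, Vp β m p01p p11p p01a p11a T b ≥ Va β m p01p p11p p01a p11a T b → m > 0) := by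
  have key : ∀ m ≤ (0 : ℝ),
      Vp β m p01p p11p p01a p11a T b < Va β m p01p p11p p01a p11a T b := fun m hm =>
    Vp_lt_Va hβ hm ⟨h1, by linarith⟩ ⟨by linarith, h3⟩ ⟨h4, by linarith⟩ ⟨by linarith, h6⟩
      h5.le h7 h8 T ⟨hb0, hb1⟩
  exact ⟨key 0 le_rfl, fun m hge => not_le.mp fun hm => (key m hm).not_ge hge⟩

theorem active_exceeds_passive_at_zero_subsidy
    (p01p p11p p01a p11a β b : ℝ) (T : ℕ)
    (h1 : 0 ≤ p01p) (h2 : p01p < p11p) (h3 : p11p ≤ 1)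
    (h4 : 0 ≤ p01a) (h5 : p01a < p11a) (h6 : p11a ≤ 1)
    (h7 : p01a > p01p) (h8 : p11a > p11p)
    (hβ : 0 < β) (hb0 : 0 ≤ b) (hb1 : b ≤ 1) (hT : 1 ≤ T) :
    Va β 0 p01p p11p p01a p11a T b > Vp β 0 p01p p11p p01a p11a T b ∧
    (∀ m : ℝ, Vp β m p01p p11p p01a p11a T b ≥ Va β m p01p p11p p01a p11a T b → m > 0) :=
  active_exceeds_passive_at_zero_subsidy_general p01p p11p p01a p11a β b T h1 h2 h3 h4 h5 h6 h7 h8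
    hβ hb0 hb1
end
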